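/- On a rooted tree, for each non-root vertex u, the total firing number satisfies c(u) = c↓(u) + δ(u, c(parent(u))), and for the root r, c(r) = c↓(r). -/

import Mathlib

open scoped Classical

/-- A finite tree rooted at `root`, with an explicit parent function. -/
structure SandpileTree (V : Type) [Fintype V] [DecidableEq V] where
  G : SimpleGraph V
  isTree : G.IsTree
  root : V
  parent : V → V
  parent_root : parent root = root
  parent_adj : ∀ v, v ≠ root → G.Adj v (parent v)
  parent_reaches_root : ∀ v, ∃ n, parent^[n] v = root

variable {V : Type} [Fintype V] [DecidableEq V]

namespace SandpileTree

noncomputable def deg (T : SandpileTree V) (v : V) : ℕ := T.G.degree v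

/-- The subtree of `u`: all vertices having `u` as an (iterated-parent) ancestor. -/
def subtree (T : SandpileTree V) (u : V) : Set V := {v | ∃ n, T.parent^[n] v = u}

noncomputable def children (T : SandpileTree V) (u : V) : Finset V :=
  Finset.univ.filter fun v => T.parent v = u ∧ v ≠ u

noncomputable def fire (T : SandpileTree V) (σ : V → ℕ) (u : V) : V → ℕ :=
  fun w => if w = u then σ u - T.deg u else if T.G.Adj u w then σ w + 1 else σ w

noncomputable def fireList (T : SandpileTree V) : (V → ℕ) → List V → (V → ℕ)
  | σ, [] => σ
  | σ, v :: l => fireList T (fire T σ v) l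

def ValidSeq (T : SandpileTree V) : (V → ℕ) → List V → Prop
  | _, [] => True
  | σ, v :: l => T.deg v ≤ σ v ∧ ValidSeq T (fire T σ v) l

/-- No vertex of `S` is full. -/
def LocalTerminal (T : SandpileTree V) (σ : V → ℕ) (S : Set V) : Prop :=
  ∀ v ∈ S, σ v < T.deg v

/-- The (unique, order-independent) configuration obtained from `σ` by firing full
vertices of `subtree u` until none is full. -/
noncomputable def final (T : SandpileTree V) (σ : V → ℕ) (u : V) : V → ℕ :=
  if h : ∃ l : List V, (∀ v ∈ l, v ∈ T.subtree u) ∧ T.ValidSeq σ l ∧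
      T.LocalTerminal (T.fireList σ l) (T.subtree u)
  then T.fireList σ h.choose else σ

/-- Local upward contribution: the number of extra chips received by `parent u`
after adding `x` chips at `u` and firing `subtree u` back to local terminality. -/
noncomputable def delta (T : SandpileTree V) (σ : V → ℕ) (u : V) (x : ℕ) : ℕ :=
  T.final (fun w => σ w + if w = u then x else 0) u (T.parent u) -
    T.final σ u (T.parent u)

/-- `ψ_u(k) = σ(u) − k·deg(u) + Σ_{v ∈ children u} δ(v,k)`. -/
noncomputable def psi (T : SandpileTree V) (σ : V → ℕ) (u : V) (k : ℕ) : ℤ :=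
  (σ u : ℤ) - (k : ℤ) * T.deg u + ∑ v ∈ T.children u, (T.delta σ v k : ℤ)

end SandpileTree

namespace SandpileTree

variable (T : SandpileTree V)

lemma parent_iter_root : ∀ n, T.parent^[n] T.root = T.root := by
  intro n; induction n with
  | zero => rfl
  | succ n ih => rw [Function.iterate_succ_apply, T.parent_root, ih]

lemma eq_root_of_cycle {u : V} {j : ℕ} (hj : 1 ≤ j) (h : T.parent^[j] u = u) :
    u = T.root := by
  obtain ⟨n, hn⟩ := T.parent_reaches_root u
  have key : ∀ m, T.parent^[j * m] u = u := by
    intro m; induction m with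
    | zero => rfl
    | succ m ih => rw [Nat.mul_succ, Function.iterate_add_apply, h, ih]
  have h2 : n ≤ j * n := Nat.le_mul_of_pos_left n hj
  calc u = T.parent^[j*n] u := (key n).symm
    _ = T.parent^[j*n - n] (T.parent^[n] u) := by
        rw [← Function.iterate_add_apply, Nat.sub_add_cancel h2]
    _ = T.root := by rw [hn, parent_iter_root]

lemma mem_subtree_self (u : V) : u ∈ T.subtree u := ⟨0, rfl⟩

lemma parent_mem_subtree {u v : V} (hv : v ∈ T.subtree u) (hvu : v ≠ u) :
    T.parent v ∈ T.subtree u := by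
  obtain ⟨n, hn⟩ := hv
  cases n with
  | zero => exact absurd hn hvu
  | succ n => exact ⟨n, by rwa [Function.iterate_succ_apply] at hn⟩

lemma mem_subtree_of_parent {u v : V} (h : T.parent v ∈ T.subtree u) :
    v ∈ T.subtree u := by
  obtain ⟨n, hn⟩ := h
  exact ⟨n + 1, by rwa [Function.iterate_succ_apply]⟩

lemma parent_not_mem_subtree {u : V} (hu : u ≠ T.root) :
    T.parent u ∉ T.subtree u := by
  rintro ⟨n, hn⟩
  exact hu (T.eq_root_of_cycle (j := n + 1) (Nat.succ_le_succ (Nat.zero_le n))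
    (by rwa [Function.iterate_succ_apply]))

lemma adj_cases {a b : V} (h : T.G.Adj a b) :
    (a ≠ T.root ∧ T.parent a = b) ∨ (b ≠ T.root ∧ T.parent b = a) := by
  classical
  set f : V → Sym2 V := fun v => s(v, T.parent v) with hf
  have hinj : Set.InjOn f (Finset.univ.erase T.root : Finset V) := by
    intro v hv w hw hvw
    simp only [hf, Sym2.eq_iff] at hvw
    rcases hvw with ⟨h1, _⟩ | ⟨h1, h2⟩
    · exact h1
    · exfalso
      have : T.parent^[2] v = v := by
        have : T.parent (T.parent v) = v := by rw [h2, ← h1]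
        simpa [Function.iterate_succ_apply] using this
      exact (Finset.mem_erase.mp hv).1 (T.eq_root_of_cycle one_le_two this)
  have hsub : (Finset.univ.erase T.root).image f ⊆ T.G.edgeFinset := by
    intro e he
    obtain ⟨v, hv, rfl⟩ := Finset.mem_image.mp he
    rw [SimpleGraph.mem_edgeFinset]
    exact T.parent_adj v (Finset.mem_erase.mp hv).1
  have hcard : ((Finset.univ.erase T.root).image f).card = T.G.edgeFinset.card := by
    rw [Finset.card_image_of_injOn (by simpa using hinj)]
    have h1 := T.isTree.card_edgeFinset
    have h2 : (Finset.univ.erase T.root).card + 1 = Fintype.card V := by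
      rw [Finset.card_erase_of_mem (Finset.mem_univ _)]
      have : 1 ≤ Fintype.card V := Fintype.card_pos_iff.mpr ⟨T.root⟩
      simp [Finset.card_univ]
      omega
    omega
  have heq : (Finset.univ.erase T.root).image f = T.G.edgeFinset :=
    Finset.eq_of_subset_of_card_le hsub (le_of_eq hcard.symm)
  have hmem : s(a, b) ∈ (Finset.univ.erase T.root).image f := by
    rw [heq, SimpleGraph.mem_edgeFinset]; exact h
  obtain ⟨v, hv, hveq⟩ := Finset.mem_image.mp hmem
  have hvroot : v ≠ T.root := (Finset.mem_erase.mp hv).1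
  simp only [hf, Sym2.eq_iff] at hveq
  rcases hveq with ⟨rfl, h2⟩ | ⟨rfl, h2⟩
  · exact Or.inl ⟨hvroot, h2⟩
  · exact Or.inr ⟨hvroot, h2⟩


lemma adj_subtree_closed {u v w : V} (hu : u ≠ T.root) (hv : v ∈ T.subtree u)
    (hvu : v ≠ u) (h : T.G.Adj v w) : w ∈ T.subtree u := by
  rcases T.adj_cases h with ⟨_, hp⟩ | ⟨_, hp⟩
  · rw [← hp]; exact T.parent_mem_subtree hv hvu
  · exact T.mem_subtree_of_parent (hp ▸ hv)

lemma eq_of_adj_parent {u w : V} (hu : u ≠ T.root) (h : T.G.Adj (T.parent u) w)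
    (hw : w ∈ T.subtree u) : w = u := by
  rcases T.adj_cases h with ⟨_, hp⟩ | ⟨_, hp⟩
  · exfalso
    obtain ⟨m, hm⟩ := hw
    apply hu
    apply T.eq_root_of_cycle (j := m + 2) (by omega)
    have : T.parent^[m+2] u = T.parent^[m] w := by
      rw [← hp]
      simp [Function.iterate_succ_apply, Function.iterate_add_apply]
    rw [this, hm]
  · obtain ⟨m, hm⟩ := hw
    cases m with
    | zero => exact hm
    | succ m =>
      exfalso
      apply hu
      apply T.eq_root_of_cycle (j := m + 1) (by omega)
      rw [Function.iterate_succ_apply] at hm ⊢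
      rwa [hp] at hm
      -- hm : T.parent^[m] (T.parent w) = u, parent w = parent u
      -- goal: parent^[m] (parent u) = u

lemma eq_parent_of_adj_not_mem {u v : V} (hu : u ≠ T.root) (h : T.G.Adj v u)
    (hv : v ∉ T.subtree u) : v = T.parent u := by
  rcases T.adj_cases h with ⟨_, hp⟩ | ⟨_, hp⟩
  · exact absurd (⟨1, by simpa using hp⟩ : v ∈ T.subtree u) hv
  · exact hp.symm

lemma fire_apply_self (σ : V → ℕ) (v : V) : T.fire σ v v = σ v - T.deg v :=
  if_pos rfl

lemma fire_apply_ne {σ : V → ℕ} {v w : V} (h : w ≠ v) :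
    T.fire σ v w = σ w + if T.G.Adj v w then 1 else 0 := by
  simp only [fire, if_neg h]
  split <;> simp

lemma self_le_fire {σ : V → ℕ} {v w : V} (h : w ≠ v) : σ w ≤ T.fire σ v w := by
  rw [T.fire_apply_ne h]; omega

lemma validSeq_mono : ∀ (l : List V) (σ τ : V → ℕ), (∀ v ∈ l, σ v ≤ τ v) →
    T.ValidSeq σ l → T.ValidSeq τ l
  | [], _, _, _, _ => trivial
  | v :: l, σ, τ, hle, ⟨h1, h2⟩ => by
    refine ⟨le_trans h1 (hle v (List.mem_cons_self (a := v) (l := l))), ?_⟩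
    refine validSeq_mono l _ _ (fun w hw => ?_) h2
    by_cases hwv : w = v
    · subst hwv
      rw [T.fire_apply_self, T.fire_apply_self]
      have := hle w (List.mem_cons_self (a := w) (l := l))
      omega
    · rw [T.fire_apply_ne hwv, T.fire_apply_ne hwv]
      have := hle w (List.mem_cons_of_mem v hw)
      omega

lemma fireList_int : ∀ (l : List V) (σ : V → ℕ), T.ValidSeq σ l → ∀ w : V,
    (T.fireList σ l w : ℤ) = (σ w : ℤ)
      + l.countP (fun v => decide (T.G.Adj v w)) - l.count w * T.deg w
  | [], σ, _, w => by simp [fireList]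
  | v :: l, σ, ⟨h1, h2⟩, w => by
    have ih := fireList_int l (T.fire σ v) h2 w
    rw [show T.fireList σ (v :: l) = T.fireList (T.fire σ v) l from rfl, ih]
    rw [List.countP_cons, List.count_cons]
    by_cases hwv : w = v
    · subst hwv
      simp only [fire, if_pos rfl, SimpleGraph.irrefl, decide_false, beq_self_eq_true,
        if_true, if_false]
      rw [Nat.cast_sub h1]
      push_cast
      ring
    · rw [T.fire_apply_ne hwv]
      have : (v == w) = false := by simp [Ne.symm hwv]
      rw [this]
      by_cases hadj : T.G.Adj v w <;> simp [hadj] <;> push_cast <;> ring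

lemma le_fireList_of_not_mem : ∀ (l : List V) (σ : V → ℕ) {w : V}, w ∉ l →
    σ w ≤ T.fireList σ l w
  | [], _, _, _ => le_refl _
  | v :: l, σ, w, h => by
    have h1 : w ≠ v := fun hh => h (hh ▸ List.mem_cons_self (a := v) (l := l))
    have h2 : w ∉ l := fun hh => h (List.mem_cons_of_mem v hh)
    exact le_trans (T.self_le_fire h1)
      (le_fireList_of_not_mem l (T.fire σ v) h2)

lemma fire_comm {σ : V → ℕ} {x y : V} (hxy : x ≠ y) (hx : T.deg x ≤ σ x)
    (hy : T.deg y ≤ σ y) : T.fire (T.fire σ x) y = T.fire (T.fire σ y) x := by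
  funext w
  by_cases hwy : w = y
  · subst hwy
    rw [T.fire_apply_self, T.fire_apply_ne (Ne.symm hxy),
      T.fire_apply_ne (Ne.symm hxy), T.fire_apply_self]
    split_ifs <;> omega
  · by_cases hwx : w = x
    · subst hwx
      rw [T.fire_apply_ne hxy, T.fire_apply_self, T.fire_apply_self,
        T.fire_apply_ne hxy]
      split_ifs <;> omega
    · rw [T.fire_apply_ne hwy, T.fire_apply_ne hwx, T.fire_apply_ne hwx,
        T.fire_apply_ne hwy]
      omega

lemma exists_split_first {v : V} : ∀ (l : List V), v ∈ l →
    ∃ a b : List V, l = a ++ v :: b ∧ v ∉ a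
  | w :: l, h => by
    by_cases hvw : v = w
    · exact ⟨[], l, by rw [hvw]; rfl, List.not_mem_nil⟩
    · have : v ∈ l := by
        rcases List.mem_cons.mp h with h' | h'
        · exact absurd h' hvw
        · exact h'
      obtain ⟨a, b, h1, h2⟩ := exists_split_first l this
      exact ⟨w :: a, b, by rw [h1]; rfl, by
        intro hh
        rcases List.mem_cons.mp hh with h' | h'
        · exact hvw h'
        · exact h2 h'⟩

lemma valid_move_front : ∀ (a : List V) (σ : V → ℕ) {v : V} (b : List V),
    T.deg v ≤ σ v → v ∉ a → T.ValidSeq σ (a ++ v :: b) →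
    T.ValidSeq σ (v :: (a ++ b)) ∧
      T.fireList σ (v :: (a ++ b)) = T.fireList σ (a ++ v :: b)
  | [], σ, v, b, hv, _, h => ⟨h, rfl⟩
  | x :: a, σ, v, b, hv, hva, h => by
    obtain ⟨hx, hrest⟩ := h
    have hvx : v ≠ x := fun hh => hva (hh ▸ List.mem_cons_self (a := x) (l := a))
    have hva' : v ∉ a := fun hh => hva (List.mem_cons_of_mem x hh)
    have hv' : T.deg v ≤ T.fire σ x v := le_trans hv (T.self_le_fire hvx)
    obtain ⟨⟨hv2, hval'⟩, heq⟩ := valid_move_front a (T.fire σ x) b hv' hva' hrest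
    have hcomm : T.fire (T.fire σ v) x = T.fire (T.fire σ x) v :=
      T.fire_comm hvx hv hx
    constructor
    · refine ⟨hv, ?_, ?_⟩
      · exact le_trans hx (T.self_le_fire hvx.symm)
      · rw [hcomm]; exact hval'
    · show T.fireList (T.fire (T.fire σ v) x) (a ++ b)
        = T.fireList (T.fire σ x) (a ++ v :: b)
      rw [hcomm]
      exact heq

lemma least_action : ∀ (m : List V) (σ : V → ℕ) (l : List V) (S : Set V),
    T.ValidSeq σ l → T.LocalTerminal (T.fireList σ l) S →
    (∀ v ∈ m, v ∈ S) → T.ValidSeq σ m →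
    ∀ w, m.count w ≤ l.count w
  | [], _, _, _, _, _, _, _ => by simp
  | v :: m, σ, l, S, hl, hterm, hmS, ⟨hv, hm⟩ => by
    have hvS : v ∈ S := hmS v (List.mem_cons_self (a := v) (l := m))
    have hvl : v ∈ l := by
      by_contra hvl
      have := T.le_fireList_of_not_mem l σ hvl
      have := hterm v hvS
      omega
    obtain ⟨a, b, rfl, hva⟩ := exists_split_first l hvl
    obtain ⟨⟨_, hval'⟩, heq⟩ := T.valid_move_front a σ b hv hva hl
    have hterm' : T.LocalTerminal (T.fireList (T.fire σ v) (a ++ b)) S := by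
      have : T.fireList (T.fire σ v) (a ++ b) = T.fireList σ (a ++ v :: b) := heq
      rw [this]; exact hterm
    have ih := least_action m (T.fire σ v) (a ++ b) S hval' hterm'
      (fun w hw => hmS w (List.mem_cons_of_mem v hw)) hm
    intro w
    have h1 := ih w
    simp only [List.count_append, List.count_cons] at *
    by_cases hwv : v = w <;> simp [hwv] at * <;> omega

lemma countP_split (l : List V) (p q : V → Bool) :
    l.countP p = l.countP (fun a => p a && q a) + l.countP (fun a => p a && !q a) := by
  rw [List.countP_eq_countP_filter_add l p q, List.countP_filter, List.countP_filter]

lemma fire_add_at (σ : V → ℕ) {v : V} (hv : T.deg v ≤ σ v) (u : V) (k : ℕ) :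
    T.fire (fun w => σ w + if w = u then k else 0) v
      = fun w => T.fire σ v w + if w = u then k else 0 := by
  funext w
  by_cases hwv : w = v
  · subst hwv
    rw [T.fire_apply_self, T.fire_apply_self]
    split_ifs <;> omega
  · rw [T.fire_apply_ne hwv, T.fire_apply_ne hwv]
    split_ifs <;> omega

lemma filter_valid {u : V} (hu : u ≠ T.root) :
    ∀ (l : List V) (σ : V → ℕ), T.ValidSeq σ l →
      T.ValidSeq (fun w => σ w + if w = u then l.count (T.parent u) else 0)
        (l.filter (fun v => decide (v ∈ T.subtree u)))
  | [], _, _ => trivial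
  | v :: l, σ, ⟨h1, h2⟩ => by
    have ih := filter_valid hu l (T.fire σ v) h2
    by_cases hvS : v ∈ T.subtree u
    · have hfil : (v :: l).filter (fun x => decide (x ∈ T.subtree u))
          = v :: l.filter (fun x => decide (x ∈ T.subtree u)) := by
        simp [List.filter_cons, hvS]
      have hvp : v ≠ T.parent u := fun hh => T.parent_not_mem_subtree hu (hh ▸ hvS)
      have hcount : (v :: l).count (T.parent u) = l.count (T.parent u) := by
        rw [List.count_cons]; simp [hvp]
      rw [hfil, hcount]
      refine ⟨by dsimp only; split_ifs <;> omega, ?_⟩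
      rw [T.fire_add_at σ h1 u (l.count (T.parent u))]
      exact ih
    · have hfil : (v :: l).filter (fun x => decide (x ∈ T.subtree u))
          = l.filter (fun x => decide (x ∈ T.subtree u)) := by
        simp [List.filter_cons, hvS]
      rw [hfil]
      refine T.validSeq_mono _ _ _ (fun w hw => ?_) ih
      have hwS : w ∈ T.subtree u := by
        have := (List.mem_filter.mp hw).2
        simpa using this
      have hwv : w ≠ v := fun hh => hvS (hh ▸ hwS)
      rw [T.fire_apply_ne hwv]
      rw [List.count_cons]
      by_cases hwu : w = u
      · subst hwu
        by_cases hadj : T.G.Adj v w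
        · have hvp : v = T.parent w := T.eq_parent_of_adj_not_mem hu hadj hvS
          subst hvp
          simp only [if_pos hadj, beq_self_eq_true, if_true]
          omega
        · have : v ≠ T.parent w := by
            intro hh
            exact hadj (hh ▸ (T.parent_adj w hu).symm)
          simp [hadj, this]
      · have hnadj : ¬ T.G.Adj v w := by
          intro hadj
          exact hvS (T.adj_subtree_closed hu hwS hwu hadj.symm)
        simp [hnadj, hwu]

lemma fireList_parent {u : V} (hu : u ≠ T.root) (l : List V) (σ : V → ℕ)
    (hl : ∀ v ∈ l, v ∈ T.subtree u) (hval : T.ValidSeq σ l) :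
    T.fireList σ l (T.parent u) = σ (T.parent u) + l.count u := by
  have hpl : T.parent u ∉ l := fun hh => T.parent_not_mem_subtree hu (hl _ hh)
  have hc0 : l.count (T.parent u) = 0 := List.count_eq_zero.mpr hpl
  have hcp : l.countP (fun v => decide (T.G.Adj v (T.parent u))) = l.count u := by
    rw [List.count_eq_countP]
    apply List.countP_congr
    intro x hx
    simp only [decide_eq_true_eq, beq_iff_eq]
    constructor
    · intro hadj
      exact T.eq_of_adj_parent hu hadj.symm (hl x hx)
    · rintro rfl
      exact T.parent_adj x hu
  have := T.fireList_int l σ hval (T.parent u)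
  rw [hc0, hcp] at this
  have h2 : (T.fireList σ l (T.parent u) : ℤ) = ((σ (T.parent u) + l.count u : ℕ) : ℤ) := by
    rw [this]; push_cast; ring
  exact_mod_cast h2

lemma filter_fireList_eq {u : V} (hu : u ≠ T.root) (lg : List V) (σ : V → ℕ)
    (hval : T.ValidSeq σ lg)
    (hvalm : T.ValidSeq (fun w => σ w + if w = u then lg.count (T.parent u) else 0)
      (lg.filter (fun v => decide (v ∈ T.subtree u)))) :
    ∀ w ∈ T.subtree u,
      T.fireList (fun w => σ w + if w = u then lg.count (T.parent u) else 0)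
        (lg.filter (fun v => decide (v ∈ T.subtree u))) w = T.fireList σ lg w := by
  intro w hw
  have hcount : (lg.filter (fun v => decide (v ∈ T.subtree u))).count w = lg.count w :=
    List.count_filter (by simpa using hw)
  have hcp : (lg.filter (fun v => decide (v ∈ T.subtree u))).countP
        (fun v => decide (T.G.Adj v w))
      = lg.countP (fun v => decide (T.G.Adj v w) && decide (v ∈ T.subtree u)) :=
    List.countP_filter (l := lg)
  have e1 := T.fireList_int _ _ hvalm w
  have e2 := T.fireList_int lg σ hval w
  have key : (T.fireList (fun w => σ w + if w = u then lg.count (T.parent u) else 0)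
      (lg.filter (fun v => decide (v ∈ T.subtree u))) w : ℤ) = (T.fireList σ lg w : ℤ) := by
    rw [e1, e2, hcount, hcp]
    by_cases hwu : w = u
    · subst hwu
      have hsplit : lg.countP (fun v => decide (T.G.Adj v w)) =
          lg.countP (fun v => decide (T.G.Adj v w) && decide (v ∈ T.subtree w))
            + lg.count (T.parent w) := by
        rw [countP_split lg _ (fun v => decide (v ∈ T.subtree w))]
        congr 1
        rw [List.count_eq_countP]
        apply List.countP_congr
        intro x _
        simp only [Bool.and_eq_true, decide_eq_true_eq, Bool.not_eq_true',
          decide_eq_false_iff_not, beq_iff_eq]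
        constructor
        · rintro ⟨hadj, hnot⟩
          exact T.eq_parent_of_adj_not_mem hu hadj hnot
        · rintro rfl
          exact ⟨(T.parent_adj w hu).symm, T.parent_not_mem_subtree hu⟩
      rw [hsplit]
      simp only [if_pos rfl]
      push_cast
      ring
    · have hcong : lg.countP (fun v => decide (T.G.Adj v w) && decide (v ∈ T.subtree u))
          = lg.countP (fun v => decide (T.G.Adj v w)) := by
        apply List.countP_congr
        intro x _
        simp only [Bool.and_eq_true, decide_eq_true_eq]
        exact ⟨fun h => h.1, fun h => ⟨h, T.adj_subtree_closed hu hw hwu h.symm⟩⟩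
      rw [hcong]
      simp [hwu]
  exact_mod_cast key

lemma counts_eq {S : Set V} (l1 l2 : List V) (σ : V → ℕ)
    (h1S : ∀ v ∈ l1, v ∈ S) (h1v : T.ValidSeq σ l1)
    (h1t : T.LocalTerminal (T.fireList σ l1) S)
    (h2S : ∀ v ∈ l2, v ∈ S) (h2v : T.ValidSeq σ l2)
    (h2t : T.LocalTerminal (T.fireList σ l2) S) :
    ∀ w, l1.count w = l2.count w :=
  fun w => le_antisymm (T.least_action l1 σ l2 S h2v h2t h1S h1v w)
    (T.least_action l2 σ l1 S h1v h1t h2S h2v w)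

end SandpileTree

/-- Total firing numbers from partial ones: for every non-root `u`,
`c(u) = c↓(u) + δ(u, c(parent u))`, and `c(root) = c↓(root)`. Here `c(v)` is the
number of firings of `v` in a global stabilizing sequence `lg`, and `c↓(u)` is the
number of firings of `u` in any sequence within `subtree u` reaching local
terminality. -/
theorem SandpileTree.count_eq_partial_add_delta (T : SandpileTree V) (σ : V → ℕ)
    (lg : List V) (hg : T.ValidSeq σ lg)
    (htg : ∀ v, T.fireList σ lg v < T.deg v) :
    (∀ u, u ≠ T.root → ∀ lu : List V, (∀ v ∈ lu, v ∈ T.subtree u) →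
      T.ValidSeq σ lu → T.LocalTerminal (T.fireList σ lu) (T.subtree u) →
      lg.count u = lu.count u + T.delta σ u (lg.count (T.parent u))) ∧
    (∀ lr : List V, (∀ v ∈ lr, v ∈ T.subtree T.root) →
      T.ValidSeq σ lr → T.LocalTerminal (T.fireList σ lr) (T.subtree T.root) →
      lg.count T.root = lr.count T.root) := by

  constructor
  · intro u hu lu hlu1 hlu2 hlu3
    have hmS : ∀ v ∈ lg.filter (fun v => decide (v ∈ T.subtree u)), v ∈ T.subtree u := by
      intro v hv
      simpa using (List.mem_filter.mp hv).2
    have hmval := T.filter_valid hu lg σ hg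
    have hmcount : (lg.filter (fun v => decide (v ∈ T.subtree u))).count u = lg.count u :=
      List.count_filter (by simp [T.mem_subtree_self])
    have hmterm : T.LocalTerminal
        (T.fireList (fun w => σ w + if w = u then lg.count (T.parent u) else 0)
          (lg.filter (fun v => decide (v ∈ T.subtree u)))) (T.subtree u) := by
      intro w hw
      rw [T.filter_fireList_eq hu lg σ hg hmval w hw]
      exact htg w
    have hex1 : ∃ l : List V, (∀ v ∈ l, v ∈ T.subtree u) ∧
        T.ValidSeq (fun w => σ w + if w = u then lg.count (T.parent u) else 0) l ∧
        T.LocalTerminal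
          (T.fireList (fun w => σ w + if w = u then lg.count (T.parent u) else 0) l)
          (T.subtree u) :=
      ⟨lg.filter (fun v => decide (v ∈ T.subtree u)), hmS, hmval, hmterm⟩
    have hex0 : ∃ l : List V, (∀ v ∈ l, v ∈ T.subtree u) ∧ T.ValidSeq σ l ∧
        T.LocalTerminal (T.fireList σ l) (T.subtree u) := ⟨lu, hlu1, hlu2, hlu3⟩
    obtain ⟨h1S, h1val, h1term⟩ := hex1.choose_spec
    obtain ⟨h0S, h0val, h0term⟩ := hex0.choose_spec
    have c1 : hex1.choose.count u = lg.count u := by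
      rw [← hmcount]
      exact T.counts_eq _ _ _ h1S h1val h1term hmS hmval hmterm u
    have c0 : hex0.choose.count u = lu.count u :=
      T.counts_eq _ _ _ h0S h0val h0term hlu1 hlu2 hlu3 u
    have hpu : T.parent u ≠ u := fun hh => T.G.irrefl (hh ▸ T.parent_adj u hu)
    have hfin1 : T.final (fun w => σ w + if w = u then lg.count (T.parent u) else 0) u
        (T.parent u) = σ (T.parent u) + lg.count u := by
      rw [final, dif_pos hex1, T.fireList_parent hu _ _ h1S h1val, c1]
      simp [hpu]
    have hfin0 : T.final σ u (T.parent u) = σ (T.parent u) + lu.count u := by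
      rw [final, dif_pos hex0, T.fireList_parent hu _ _ h0S h0val, c0]
    have hle : lu.count u ≤ lg.count u := by
      have hv' : T.ValidSeq (fun w => σ w + if w = u then lg.count (T.parent u) else 0) lu :=
        T.validSeq_mono lu σ _ (fun v _ => by split_ifs <;> omega) hlu2
      have := T.least_action lu _ hex1.choose (T.subtree u) h1val h1term hlu1 hv' u
      omega
    rw [delta, hfin1, hfin0]
    omega
  · intro lr h1 h2 h3
    have hS : ∀ v : V, v ∈ T.subtree T.root := fun v => T.parent_reaches_root v
    exact T.counts_eq lg lr σ (fun v _ => hS v) hg (fun v _ => htg v)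
      h1 h2 h3 T.root
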